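/- arXiv:math/0608179 — 9 statements merged into one kernel-verified Lean document; each statement's English description precedes it below -/
import Mathlib

section
/- Let A be a commutative monoid and B ⊆ A a submonoid of finite index, i.e., there exists N ≥ 1 such that a^N ∈ B for every a ∈ A. Then for every prime ideal 𝔭 of A the set 𝔭 ∩ B is a prime ideal of B, and the map ψ : spec A → spec B given by ψ(𝔭) = 𝔭 ∩ B is a bijection. -/
/-- An ideal of a commutative monoid `A` is a subset `P` with `A·P ⊆ P`; it is a prime
ideal if moreover its complement is a submonoid (so the empty set is a prime ideal). -/
def IsPrimeIdeal {A : Type*} [CommMonoid A] (P : Set A) : Prop :=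
  (∀ a x : A, x ∈ P → a * x ∈ P) ∧ (1 : A) ∉ P ∧
    ∀ x y : A, x ∉ P → y ∉ P → x * y ∉ P

lemma pow_not_mem_of_prime {A : Type*} [CommMonoid A] {P : Set A} (hP : IsPrimeIdeal P)
    {a : A} (ha : a ∉ P) (n : ℕ) : a ^ n ∉ P := by
  induction n with
  | zero => simpa using hP.2.1
  | succ n ih => rw [pow_succ]; exact hP.2.2 _ _ ih ha

lemma mem_iff_pow_mem {A : Type*} [CommMonoid A] {P : Set A} (hP : IsPrimeIdeal P)
    {N : ℕ} (hN : 1 ≤ N) (a : A) : a ∈ P ↔ a ^ N ∈ P := by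
  constructor
  · intro ha
    obtain ⟨n, rfl⟩ := Nat.exists_eq_add_of_le hN
    rw [add_comm, pow_succ]
    exact hP.1 _ _ ha
  · intro h
    by_contra hc
    exact pow_not_mem_of_prime hP hc N h

/-- Lemma 4.2: If `B` is a submonoid of finite index of the commutative
monoid `A` (there is `N ≥ 1` with `a ^ N ∈ B` for all `a`), then for every prime ideal
`𝔭` of `A` the set `𝔭 ∩ B` is a prime ideal of `B`, and `𝔭 ↦ 𝔭 ∩ B` is a bijection
from `spec A` onto `spec B`. -/
theorem stmt_0 (A : Type*) [CommMonoid A] (B : Submonoid A) (N : ℕ) (hN : 1 ≤ N)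
    (hpow : ∀ a : A, a ^ N ∈ B) :
    (∀ P : Set A, IsPrimeIdeal P →
        IsPrimeIdeal ((fun b : B => (b : A)) ⁻¹' P)) ∧
      Set.BijOn (fun P : Set A => (fun b : B => (b : A)) ⁻¹' P)
        {P : Set A | IsPrimeIdeal P} {Q : Set B | IsPrimeIdeal Q} := by
  have hprime : ∀ P : Set A, IsPrimeIdeal P →
      IsPrimeIdeal ((fun b : B => (b : A)) ⁻¹' P) := by
    intro P hP
    refine ⟨?_, ?_, ?_⟩
    · intro a x hx
      exact hP.1 (a : A) (x : A) hx
    · simpa using hP.2.1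
    · intro x y hx hy
      exact hP.2.2 (x : A) (y : A) hx hy
  refine ⟨hprime, fun P hP => hprime P hP, ?_, ?_⟩
  · -- injective
    intro P1 h1 P2 h2 heq
    ext a
    have key : ∀ P : Set A, IsPrimeIdeal P →
        (a ∈ P ↔ (⟨a ^ N, hpow a⟩ : B) ∈ (fun b : B => (b : A)) ⁻¹' P) := by
      intro P hP
      rw [mem_iff_pow_mem hP hN a]; rfl
    rw [key P1 h1, key P2 h2]
    simp only at heq
    rw [heq]
  · -- surjective
    intro Q hQ
    refine ⟨{a : A | (⟨a ^ N, hpow a⟩ : B) ∈ Q}, ?_, ?_⟩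
    · refine ⟨?_, ?_, ?_⟩
      · intro a x hx
        have : (⟨(a * x) ^ N, hpow _⟩ : B) = ⟨a ^ N, hpow a⟩ * ⟨x ^ N, hpow x⟩ :=
          Subtype.ext (mul_pow a x N)
        show (⟨(a * x) ^ N, hpow _⟩ : B) ∈ Q
        rw [this]
        exact hQ.1 _ _ hx
      · show (⟨(1 : A) ^ N, hpow 1⟩ : B) ∈ Q → False
        have : (⟨(1 : A) ^ N, hpow 1⟩ : B) = 1 := Subtype.ext (one_pow N)
        rw [this]; exact hQ.2.1
      · intro x y hx hy
        have : (⟨(x * y) ^ N, hpow _⟩ : B) = ⟨x ^ N, hpow x⟩ * ⟨y ^ N, hpow y⟩ :=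
          Subtype.ext (mul_pow x y N)
        show (⟨(x * y) ^ N, hpow _⟩ : B) ∉ Q
        rw [this]
        exact hQ.2.2 _ _ hx hy
    · ext b
      show (⟨(b : A) ^ N, hpow _⟩ : B) ∈ Q ↔ b ∈ Q
      have : (⟨(b : A) ^ N, hpow _⟩ : B) = b ^ N := by
        ext; simp
      rw [this]
      exact (mem_iff_pow_mem hQ hN b).symm
end

section
/- Let B be a commutative group and H a subgroup of B isomorphic to ℚ/ℤ. Assume that for every b ∈ B there exists n ≥ 1 with b^n ∈ H, and that for every h ∈ H and every n ≥ 1 the equation x^n = h has at most n solutions in B. Then H = B. -/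
/-!
Let `b ∈ B` with `b ^ n ∈ H`. Since `ℚ/ℤ` is divisible, `b ^ n = c ^ n` for some `c ∈ H`, and
`ℚ/ℤ` has an element `ζ` of order `n`. The `n` distinct elements `c * ζ ^ k` (`k < n`) of `H` all
solve `x ^ n = b ^ n`, so `b` must be one of them.
-/

theorem Subgroup.mem_of_pow_eq_of_orderOf_eq {B : Type*} [CommGroup B] {H : Subgroup B}
    {b c ζ : B} {n : ℕ} (hc : c ∈ H) (hcb : c ^ n = b ^ n) (hζ : ζ ∈ H) (hζn : orderOf ζ = n)
    (hsol : ∀ s : Finset B, (∀ x ∈ s, x ^ n = b ^ n) → s.card ≤ n) : b ∈ H := by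
  classical
  by_contra hb
  set roots := (Finset.range n).image fun k => c * ζ ^ k
  have hroots_card : roots.card = n := by
    rw [Finset.card_image_of_injOn, Finset.card_range]
    intro i hi j hj hij
    rw [Finset.coe_range, ← hζn] at hi hj
    exact pow_injOn_Iio_orderOf hi hj (mul_left_cancel hij)
  have hb_roots : b ∉ roots := by
    simp only [roots, Finset.mem_image]
    rintro ⟨k, -, rfl⟩
    exact hb (H.mul_mem hc (H.pow_mem hζ k))
  have := hsol (insert b roots) <| by
    simp only [roots, Finset.forall_mem_insert, Finset.forall_mem_image]
    refine ⟨trivial, fun k _ => ?_⟩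
    rw [mul_pow, hcb, pow_right_comm, ← hζn, pow_orderOf_eq_one, one_pow, mul_one]
  rw [Finset.card_insert_of_notMem hb_roots, hroots_card] at this
  omega

namespace AddCircle

variable {𝕜 : Type*} [Field 𝕜] [LinearOrder 𝕜] [IsStrictOrderedRing 𝕜] {p : 𝕜} [Fact (0 < p)]

theorem exists_nsmul_eq [FloorRing 𝕜] (x : AddCircle p) {n : ℕ} (hn : 0 < n) :
    ∃ y : AddCircle p, n • y = x :=
  ⟨DivisibleBy.div x (n : ℤ), by
    rw [← natCast_zsmul]; exact DivisibleBy.div_cancel x (Int.natCast_ne_zero.mpr hn.ne')⟩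

theorem exists_addOrderOf_eq {n : ℕ} (hn : 0 < n) : ∃ ζ : AddCircle p, addOrderOf ζ = n :=
  ⟨_, addOrderOf_period_div hn⟩

end AddCircle

/-- Let `B` be a commutative group and `H` a subgroup isomorphic to `ℚ/ℤ`.
If every element of `B` has some positive power in `H`, and for every `h ∈ H` and `n ≥ 1`
the equation `x ^ n = h` has at most `n` solutions in `B`, then `H = B`. -/
theorem stmt_3 (B : Type*) [CommGroup B] (H : Subgroup B)
    (e : H ≃* Multiplicative (ℚ ⧸ AddSubgroup.zmultiples (1 : ℚ)))
    (halg : ∀ b : B, ∃ n : ℕ, 1 ≤ n ∧ b ^ n ∈ H)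
    (hsol : ∀ h ∈ H, ∀ n : ℕ, 1 ≤ n →
      ∀ s : Finset B, (∀ x ∈ s, x ^ n = h) → s.card ≤ n) :
    H = ⊤ := by
  -- `ℚ ⧸ AddSubgroup.zmultiples 1` is by definition `AddCircle (1 : ℚ)`.
  have : Fact ((0 : ℚ) < 1) := ⟨one_pos⟩
  refine eq_top_iff.mpr fun b _ => ?_
  obtain ⟨n, hn, hbn⟩ := halg b
  obtain ⟨y, hy⟩ := AddCircle.exists_nsmul_eq (p := (1 : ℚ))
    (Multiplicative.toAdd (e ⟨b ^ n, hbn⟩)) hn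
  obtain ⟨ζ, hζ⟩ := AddCircle.exists_addOrderOf_eq (p := (1 : ℚ)) hn
  refine H.mem_of_pow_eq_of_orderOf_eq (e.symm (.ofAdd y)).2 ?_ (e.symm (.ofAdd ζ)).2 ?_
    (hsol _ hbn n hn)
  · rw [← H.coe_pow, ← map_pow, ← ofAdd_nsmul, hy, ofAdd_toAdd, e.symm_apply_apply]
  · rw [Subgroup.orderOf_coe, e.symm.orderOf_eq, orderOf_ofAdd_eq_addOrderOf, hζ]
end

section
/- Let A be the commutative monoid (ℚ/ℤ) × ℕ written multiplicatively (its group of units is A^× = (ℚ/ℤ) × {0}). Let B be a commutative monoid and φ : A → B a monoid homomorphism satisfying: (1) φ is local: if φ(a) is invertible in B then a is invertible in A; (2) every non-invertible element of B can be written as φ(a)·b with a a non-invertible element of A and b ∈ B; (3) φ is injective on the units of A; (4) for every b ∈ B there exists n ≥ 1 with b^n ∈ φ(A); (5) for every a ∈ A and every n ≥ 1 the equation x^n = φ(a) has at most n solutions in B; (6) B is finitely generated as an A-module: there exist b₁, …, b_r ∈ B with B = φ(A)b₁ ∪ ⋯ ∪ φ(A)b_r; (7) the A-action on B is cancellative: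 φ(a)x = φ(a)y implies x = y for all a ∈ A and x, y ∈ B. Then φ is an isomorphism of monoids (bijective). -/
/-!
Write `A = (ℚ/ℤ) × ℕ` multiplicatively, so that every element is `u πᵐ` with `u` a unit and
`π = (0, 1)`, and put `t = φ π`, a non-unit since `φ` is local. Cancellativity lets one compare
`t`-adic valuations: `tᵏ x = φ (u πᵐ)` forces `k ≤ m` and `x = φ (u πᵐ⁻ᵏ)`. Applied twice this
gives injectivity, given injectivity on units.

A unit `v` of `B` satisfies `vⁿ = φ u` for a unit `u`. Since `ℚ/ℤ` is divisible with `n`-torsion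
of order `n`, `u` has `n` distinct `n`-th roots in `A`, and their images already exhaust the at
most `n` solutions of `xⁿ = φ u`, so `v ∈ φ(A)`. A non-unit `b` is divisible by `t`, and
induction on the valuation of `bⁿ ∈ φ(A)` reduces surjectivity to the case of units.
-/

open Multiplicative

theorem Finset.mem_of_forall_card_le {α : Type*} {P : α → Prop} {s : Finset α}
    (hs : ∀ x ∈ s, P x) (hmax : ∀ t : Finset α, (∀ x ∈ t, P x) → t.card ≤ s.card)
    {u : α} (hu : P u) : u ∈ s := by
  classical
  by_contra hus
  have := hmax (insert u s) (Finset.forall_mem_insert _ _ _ |>.2 ⟨hu, hs⟩)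
  rw [Finset.card_insert_of_notMem hus] at this
  omega

theorem QuotientAddGroup.exists_finset_card_nsmul_eq_of_zmultiples_one {n : ℕ} (hn : 0 < n)
    (g : ℚ ⧸ AddSubgroup.zmultiples (1 : ℚ)) :
    ∃ s : Finset (ℚ ⧸ AddSubgroup.zmultiples (1 : ℚ)), s.card = n ∧ ∀ x ∈ s, n • x = g := by
  obtain ⟨q, rfl⟩ := QuotientAddGroup.mk_surjective g
  have hn' : (n : ℚ) ≠ 0 := by positivity
  let root : ℕ → ℚ ⧸ AddSubgroup.zmultiples (1 : ℚ) := fun k => ((q + k) / n : ℚ)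
  refine ⟨(Finset.range n).image root, ?_, ?_⟩
  · rw [Finset.card_image_of_injOn, Finset.card_range]
    intro k hk l hl hkl
    simp only [Finset.coe_range, Set.mem_Iio] at hk hl
    obtain ⟨z, hz⟩ := AddSubgroup.mem_zmultiples_iff.1 (QuotientAddGroup.eq_iff_sub_mem.1 hkl)
    have hkl : (k : ℤ) - l = z * n := by
      rw [zsmul_eq_mul, mul_one, div_sub_div_same, add_sub_add_left_eq_sub,
        eq_div_iff hn'] at hz
      exact_mod_cast hz.symm
    have := Int.eq_zero_of_abs_lt_dvd ⟨z, hkl.trans (mul_comm _ _)⟩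
      (abs_sub_lt_iff.2 ⟨by omega, by omega⟩)
    omega
  · simp only [Finset.mem_image]
    rintro _ ⟨k, -, rfl⟩
    rw [← QuotientAddGroup.mk_nsmul, nsmul_eq_mul, mul_div_cancel₀ _ hn',
      QuotientAddGroup.eq_iff_sub_mem]
    exact ⟨k, by simp⟩

section DiscreteValuationMonoid

variable {G B : Type*} [AddCommGroup G] [CommMonoid B]

theorem isUnit_ofAdd_prod_iff {g : G} {m : ℕ} :
    IsUnit (ofAdd (g, m) : Multiplicative (G × ℕ)) ↔ m = 0 := by
  rw [isUnit_iff_exists_inv]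
  constructor
  · rintro ⟨b, hb⟩
    have := congrArg (fun z => (toAdd z).2) hb
    simp only [toAdd_mul, toAdd_ofAdd, Prod.snd_add, toAdd_one, Prod.snd_zero] at this
    omega
  · rintro rfl
    exact ⟨ofAdd (-g, 0), by simp [← ofAdd_add]⟩

theorem ofAdd_prod_eq_pow_mul (g : G) (m : ℕ) :
    (ofAdd (g, m) : Multiplicative (G × ℕ)) = ofAdd (0, 1) ^ m * ofAdd (g, 0) := by
  rw [← ofAdd_nsmul, ← ofAdd_add]
  simp

variable (φ : Multiplicative (G × ℕ) →* B)

theorem map_ofAdd_prod_eq_pow_mul (g : G) (m : ℕ) :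
    φ (ofAdd (g, m)) = φ (ofAdd (0, 1)) ^ m * φ (ofAdd (g, 0)) := by
  rw [ofAdd_prod_eq_pow_mul, map_mul, map_pow]

theorem not_isUnit_map_ofAdd_zero_one [IsLocalHom φ] : ¬ IsUnit (φ (ofAdd ((0 : G), 1))) :=
  fun h => one_ne_zero (isUnit_ofAdd_prod_iff.1 (isUnit_of_map_unit φ _ h))

theorem injective_map_ofAdd_zero (hunits : Set.InjOn φ {a | IsUnit a}) :
    Function.Injective fun g : G => φ (ofAdd (g, 0)) := fun _ _ h => by
  simpa using hunits (isUnit_ofAdd_prod_iff.2 rfl) (isUnit_ofAdd_prod_iff.2 rfl) h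

theorem le_and_eq_of_pow_mul_eq_map [IsLocalHom φ] (hreg : ∀ a, IsLeftRegular (φ a))
    {k m : ℕ} {g : G} {x : B} (h : φ (ofAdd (0, 1)) ^ k * x = φ (ofAdd (g, m))) :
    k ≤ m ∧ x = φ (ofAdd (g, m - k)) := by
  set t := φ (ofAdd ((0 : G), 1))
  have hcancel (j : ℕ) : IsLeftRegular (t ^ j) := map_pow φ _ j ▸ hreg _
  by_cases hkm : k ≤ m
  · refine ⟨hkm, hcancel k ?_⟩
    show t ^ k * x = t ^ k * φ (ofAdd (g, m - k))
    rw [h, map_ofAdd_prod_eq_pow_mul φ g m, map_ofAdd_prod_eq_pow_mul φ g (m - k), ← mul_assoc,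
      ← pow_add, Nat.add_sub_cancel' hkm]
  · obtain ⟨j, hj, rfl⟩ : ∃ j, j ≠ 0 ∧ k = m + j := ⟨k - m, by omega, by omega⟩
    have hunit : t ^ j * x = φ (ofAdd (g, 0)) := hcancel m <| by
      show t ^ m * (t ^ j * x) = t ^ m * φ (ofAdd (g, 0))
      rw [← mul_assoc, ← pow_add, h, map_ofAdd_prod_eq_pow_mul φ g m]
    have ht : IsUnit (t ^ j) :=
      isUnit_of_mul_isUnit_left (hunit ▸ (isUnit_ofAdd_prod_iff.2 rfl).map φ)
    exact absurd ((isUnit_pow_iff hj).1 ht) (not_isUnit_map_ofAdd_zero_one φ)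

theorem injective_of_isLocalHom [IsLocalHom φ] (hunits : Set.InjOn φ {a | IsUnit a})
    (hreg : ∀ a, IsLeftRegular (φ a)) : Function.Injective φ := by
  intro a a' h
  obtain ⟨⟨g, m⟩, rfl⟩ := ofAdd.surjective a
  obtain ⟨⟨g', m'⟩, rfl⟩ := ofAdd.surjective a'
  have h₁ := h
  have h₂ := h.symm
  rw [map_ofAdd_prod_eq_pow_mul φ g m] at h₁
  rw [map_ofAdd_prod_eq_pow_mul φ g' m'] at h₂
  obtain ⟨hle, he⟩ := le_and_eq_of_pow_mul_eq_map φ hreg h₁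
  obtain ⟨hle', -⟩ := le_and_eq_of_pow_mul_eq_map φ hreg h₂
  obtain rfl : m = m' := le_antisymm hle hle'
  rw [Nat.sub_self] at he
  rw [injective_map_ofAdd_zero φ hunits he]

theorem mem_range_of_isUnit [IsLocalHom φ]
    (hroots : ∀ n, 0 < n → ∀ g : G, ∃ s : Finset G, s.card = n ∧ ∀ x ∈ s, n • x = g)
    (hunits : Set.InjOn φ {a | IsUnit a})
    (halg : ∀ b : B, ∃ n : ℕ, 1 ≤ n ∧ b ^ n ∈ Set.range φ)
    (hsep : ∀ a, ∀ n : ℕ, 1 ≤ n → ∀ s : Finset B, (∀ x ∈ s, x ^ n = φ a) → s.card ≤ n)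
    {u : B} (hu : IsUnit u) : u ∈ Set.range φ := by
  classical
  obtain ⟨n, hn, a, ha⟩ := halg u
  obtain ⟨⟨g, m⟩, rfl⟩ := ofAdd.surjective a
  obtain rfl : m = 0 := isUnit_ofAdd_prod_iff.1 (isUnit_of_map_unit φ _ (ha ▸ hu.pow n))
  obtain ⟨s, hcard, hs⟩ := hroots n hn g
  let root : G → B := fun x => φ (ofAdd (x, 0))
  have hroot : ∀ y ∈ s.image root, y ^ n = φ (ofAdd (g, 0)) := by
    simp only [Finset.mem_image]
    rintro _ ⟨x, hx, rfl⟩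
    rw [← map_pow, ← ofAdd_nsmul, Prod.smul_mk, hs x hx, smul_zero]
  have hmax (t : Finset B) (ht : ∀ y ∈ t, y ^ n = φ (ofAdd (g, 0))) :
      t.card ≤ (s.image root).card := by
    rw [Finset.card_image_of_injOn (injective_map_ofAdd_zero φ hunits).injOn, hcard]
    exact hsep _ n hn t ht
  obtain ⟨x, -, hx⟩ := Finset.mem_image.1 (Finset.mem_of_forall_card_le hroot hmax ha.symm)
  exact ⟨_, hx⟩

theorem surjective_of_isLocalHom [IsLocalHom φ]
    (hroots : ∀ n, 0 < n → ∀ g : G, ∃ s : Finset G, s.card = n ∧ ∀ x ∈ s, n • x = g)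
    (hunits : Set.InjOn φ {a | IsUnit a}) (hreg : ∀ a, IsLeftRegular (φ a))
    (hunram : ∀ b : B, ¬ IsUnit b → ∃ a, ∃ b' : B, ¬ IsUnit a ∧ b = φ a * b')
    (halg : ∀ b : B, ∃ n : ℕ, 1 ≤ n ∧ b ^ n ∈ Set.range φ)
    (hsep : ∀ a, ∀ n : ℕ, 1 ≤ n → ∀ s : Finset B, (∀ x ∈ s, x ^ n = φ a) → s.card ≤ n) :
    Function.Surjective φ := by
  have hdvd : ∀ b : B, ¬ IsUnit b → ∃ e, b = φ (ofAdd (0, 1)) * e := by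
    intro b hb
    obtain ⟨a, b', ha, rfl⟩ := hunram b hb
    obtain ⟨⟨g, m⟩, rfl⟩ := ofAdd.surjective a
    obtain ⟨m, rfl⟩ := Nat.exists_eq_add_one_of_ne_zero (mt isUnit_ofAdd_prod_iff.2 ha)
    refine ⟨φ (ofAdd (0, 1)) ^ m * φ (ofAdd (g, 0)) * b', ?_⟩
    rw [map_ofAdd_prod_eq_pow_mul φ g (m + 1), pow_succ']
    ac_rfl
  suffices ∀ m b n, 1 ≤ n → ∀ g : G, b ^ n = φ (ofAdd (g, m)) → b ∈ Set.range φ by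
    intro b
    obtain ⟨n, hn, a, ha⟩ := halg b
    exact this _ b n hn (toAdd a).1 ha.symm
  intro m
  induction m using Nat.strong_induction_on with
  | _ m ih =>
    intro b n hn g hb
    by_cases hu : IsUnit b
    · exact mem_range_of_isUnit φ hroots hunits halg hsep hu
    obtain ⟨e, rfl⟩ := hdvd b hu
    rw [mul_pow] at hb
    obtain ⟨hnm, he⟩ := le_and_eq_of_pow_mul_eq_map φ hreg hb
    obtain ⟨a, rfl⟩ := ih (m - n) (by omega) e n hn g he
    exact ⟨ofAdd (0, 1) * a, map_mul φ _ _⟩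

end DiscreteValuationMonoid

theorem stmt_4_general (B : Type*) [CommMonoid B]
    (φ : Multiplicative ((ℚ ⧸ AddSubgroup.zmultiples (1 : ℚ)) × ℕ) →* B)
    -- (1) φ is local
    (h1 : ∀ a, IsUnit (φ a) → IsUnit a)
    -- (2) φ(m_A)·B = m_B
    (h2 : ∀ b : B, ¬ IsUnit b → ∃ a, ∃ b' : B, ¬ IsUnit a ∧ b = φ a * b')
    -- (3) φ is injective on units
    (h3 : ∀ a a', IsUnit a → IsUnit a' → φ a = φ a' → a = a')
    -- (4) B is algebraic over φ(A)
    (h4 : ∀ b : B, ∃ n : ℕ, 1 ≤ n ∧ b ^ n ∈ Set.range φ)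
    -- (5) x^n = φ(a) has at most n solutions in B
    (h5 : ∀ a, ∀ n : ℕ, 1 ≤ n →
      ∀ s : Finset B, (∀ x ∈ s, x ^ n = φ a) → s.card ≤ n)
    -- (7) the A-action on B is cancellative
    (h7 : ∀ a, ∀ x y : B, φ a * x = φ a * y → x = y) :
    Function.Bijective φ := by
  have : IsLocalHom φ := ⟨h1⟩
  have hunits : Set.InjOn φ {a | IsUnit a} := fun a ha a' ha' => h3 a a' ha ha'
  have hreg : ∀ a, IsLeftRegular (φ a) := fun a x y => h7 a x y
  exact ⟨injective_of_isLocalHom φ hunits hreg,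
    surjective_of_isLocalHom φ
      (fun _ hn => QuotientAddGroup.exists_finset_card_nsmul_eq_of_zmultiples_one hn)
      hunits hreg h2 h4 h5⟩

/-- Proposition 3.2: Let `A = (ℚ/ℤ) × ℕ` written multiplicatively and let
`φ : A →* B` be a local, unramified, finite and flat homomorphism of commutative monoids,
i.e. satisfying (1)–(7) below.  Then `φ` is an isomorphism (bijective). -/
theorem stmt_4 (B : Type*) [CommMonoid B]
    (φ : Multiplicative ((ℚ ⧸ AddSubgroup.zmultiples (1 : ℚ)) × ℕ) →* B)
    -- (1) φ is local
    (h1 : ∀ a, IsUnit (φ a) → IsUnit a)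
    -- (2) φ(m_A)·B = m_B
    (h2 : ∀ b : B, ¬ IsUnit b → ∃ a, ∃ b' : B, ¬ IsUnit a ∧ b = φ a * b')
    -- (3) φ is injective on units
    (h3 : ∀ a a', IsUnit a → IsUnit a' → φ a = φ a' → a = a')
    -- (4) B is algebraic over φ(A)
    (h4 : ∀ b : B, ∃ n : ℕ, 1 ≤ n ∧ b ^ n ∈ Set.range φ)
    -- (5) x^n = φ(a) has at most n solutions in B
    (h5 : ∀ a, ∀ n : ℕ, 1 ≤ n →
      ∀ s : Finset B, (∀ x ∈ s, x ^ n = φ a) → s.card ≤ n)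
    -- (6) B is a finitely generated A-module
    (h6 : ∃ (r : ℕ) (c : Fin r → B), ∀ x : B, ∃ (i : Fin r), ∃ a, x = φ a * c i)
    -- (7) the A-action on B is cancellative
    (h7 : ∀ a, ∀ x y : B, φ a * x = φ a * y → x = y) :
    Function.Bijective φ :=
  stmt_4_general B φ h1 h2 h3 h4 h5 h7
end

section
/- Let A be a submonoid of a commutative monoid B such that B is algebraic over A, i.e., for every b ∈ B there exists n ≥ 1 with b^n ∈ A. Then the monoid algebra ℤ[B] (MonoidAlgebra ℤ B) is integral over the subring ℤ[A], the image of MonoidAlgebra ℤ A under the ring homomorphism induced by the inclusion A → B; i.e., every element of ℤ[B] satisfies a monic polynomial with coefficients in ℤ[A]. -/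
/-!
A monomial `r • b` with `b ^ n ∈ A` is a root of the monic polynomial `X ^ n - rⁿ • bⁿ` over
`R[A]`, since `(r • b) ^ n = rⁿ • bⁿ`. The monomials span `R[B]` and integral elements are closed
under addition.
-/

namespace MonoidAlgebra

variable {R B : Type*} [CommRing R] [CommMonoid B] (A : Submonoid B)

theorem mapDomainRingHom_subtype_single (a : A) (r : R) :
    mapDomainRingHom R A.subtype (single a r) = single (a : B) r := by
  simp [mapDomainRingHom]

theorem isIntegralElem_single_of_pow_mem {b : B} {n : ℕ} (hn : n ≠ 0) (hb : b ^ n ∈ A) (r : R) :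
    (mapDomainRingHom R A.subtype).IsIntegralElem (single b r) := by
  refine ⟨Polynomial.X ^ n - Polynomial.C (single ⟨b ^ n, hb⟩ (r ^ n)),
    Polynomial.monic_X_pow_sub_C _ hn, ?_⟩
  rw [Polynomial.eval₂_sub, Polynomial.eval₂_X_pow, Polynomial.eval₂_C,
    mapDomainRingHom_subtype_single, single_pow, sub_self]

theorem isIntegral_mapDomainRingHom_subtype (halg : ∀ b : B, ∃ n : ℕ, 1 ≤ n ∧ b ^ n ∈ A) :
    (mapDomainRingHom R A.subtype).IsIntegral := by
  intro x
  induction x using induction_linear with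
  | zero => exact RingHom.isIntegralElem_zero _
  | add x y hx hy => exact hx.add _ hy
  | single b r =>
    obtain ⟨n, hn, hb⟩ := halg b
    exact isIntegralElem_single_of_pow_mem A (by omega) hb r

end MonoidAlgebra

/-- If `B` is algebraic over its submonoid `A` (every `b ∈ B` has a positive
power in `A`), then `ℤ[B]` is integral over the image of `ℤ[A]`: every element of
`MonoidAlgebra ℤ B` satisfies a monic polynomial with coefficients coming from
`MonoidAlgebra ℤ A` via the ring homomorphism induced by the inclusion `A → B`. -/
theorem stmt_6 (B : Type*) [CommMonoid B] (A : Submonoid B)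
    (halg : ∀ b : B, ∃ n : ℕ, 1 ≤ n ∧ b ^ n ∈ A) :
    ∀ x : MonoidAlgebra ℤ B,
      (MonoidAlgebra.mapDomainRingHom ℤ A.subtype).IsIntegralElem x :=
  MonoidAlgebra.isIntegral_mapDomainRingHom_subtype A halg
end

section
/- Let k be a field and let G = Multiplicative k be the additive group of k regarded as a multiplicative group. Equip ℤ with the module structure over the group ring ℤ[G] = MonoidAlgebra ℤ G given by the augmentation map ℤ[G] → ℤ sending every g ∈ G to 1. Then ℤ is not flat as a ℤ[G]-module. -/
/-!
If `ℤ` were flat over `A = ℤ[G]`, then for the augmentation ideal `I` the multiplication map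
`I ⊗[A] ℤ → ℤ` would be injective; it is zero, since `I` acts on `ℤ` by `0`, so `I ⊗[A] ℤ = 0`.
But `I ⊗[A] ℤ ≅ I/I²` receives a nonzero map: a homomorphism `φ` from `G` to the additive group
of `S` gives an algebra map `A → S[ε]`, `g ↦ 1 + φ(g) ε`, whose `ε`-part is a derivation that is
`A`-linear on `I` and sends `g - 1` to `φ(g)`. For `G = k` and `φ = id` this is nonzero.
-/

open TensorProduct DualNumber

theorem Module.Flat.balanced_eq_zero_of_smul_eq_zero {R M N : Type*} [CommRing R]
    [AddCommGroup M] [Module R M] [Module.Flat R M] [AddCommGroup N] (I : Ideal R)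
    (f : I →+ M →+ N) (hf : ∀ (r : R) (x : I) (m : M), f (r • x) m = f x (r • m))
    {x : I} {m : M} (h : (x : R) • m = 0) : f x m = 0 := by
  have hxm : x ⊗ₜ[R] m = 0 := by
    apply Module.Flat.rTensor_preserves_injective_linearMap I.subtype Subtype.val_injective
    rw [LinearMap.rTensor_tmul, map_zero, Submodule.subtype_apply, ← mul_one (x : R),
      ← smul_eq_mul, smul_tmul, h, tmul_zero]
  simpa using congr(liftAddHom f hf $hxm)

namespace MonoidAlgebra

noncomputable abbrev intAugmentation (G : Type*) [CommMonoid G] : MonoidAlgebra ℤ G →+* ℤ :=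
  (lift ℤ ℤ G 1).toRingHom

variable {G S : Type*} [CommMonoid G] [CommRing S]

def toDualNumber (φ : G →* Multiplicative S) : G →* DualNumber S where
  toFun g := 1 + (φ g).toAdd • ε
  map_one' := by simp
  map_mul' g h := by ext <;> simp [toAdd_mul, add_smul, add_comm]

theorem fst_lift_toDualNumber (φ : G →* Multiplicative S) (x : MonoidAlgebra ℤ G) :
    (lift ℤ (DualNumber S) G (toDualNumber φ) x).fst = intAugmentation G x := by
  have : (TrivSqZeroExt.fstHom ℤ S S).comp (lift ℤ (DualNumber S) G (toDualNumber φ)) =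
      (Algebra.ofId ℤ S).comp (lift ℤ ℤ G 1) := by
    ext g; simp [toDualNumber]
  exact congr($this x)

theorem snd_lift_toDualNumber_of (φ : G →* Multiplicative S) (g : G) :
    (lift ℤ (DualNumber S) G (toDualNumber φ) (of ℤ G g)).snd = (φ g).toAdd := by
  simp [toDualNumber]

theorem snd_lift_toDualNumber_mul_of_mem_ker (φ : G →* Multiplicative S)
    (r : MonoidAlgebra ℤ G) {y : MonoidAlgebra ℤ G} (hy : y ∈ RingHom.ker (intAugmentation G)) :
    (lift ℤ (DualNumber S) G (toDualNumber φ) (r * y)).snd =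
      intAugmentation G r • (lift ℤ (DualNumber S) G (toDualNumber φ) y).snd := by
  rw [map_mul, DualNumber.snd_mul, fst_lift_toDualNumber, fst_lift_toDualNumber,
    RingHom.mem_ker.mp hy, Int.cast_zero, mul_zero, add_zero, zsmul_eq_mul]

theorem eq_one_of_flat_intAugmentation
    (hflat : @Module.Flat (MonoidAlgebra ℤ G) ℤ _ _ (Module.compHom ℤ (intAugmentation G)))
    (φ : G →* Multiplicative S) : φ = 1 := by
  let _ := Module.compHom ℤ (intAugmentation G)
  set ψ := lift ℤ (DualNumber S) G (toDualNumber φ)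
  set I := RingHom.ker (intAugmentation G)
  let f : I →+ ℤ →+ S := (smulAddHom ℤ S).flip.comp <|
    (TrivSqZeroExt.sndHom S S).toAddMonoidHom.comp <|
      ψ.toAddMonoidHom.comp I.subtype.toAddMonoidHom
  have hf : ∀ (r : MonoidAlgebra ℤ G) (y : I) (n : ℤ), f (r • y) n = f y (r • n) := by
    intro r y n
    change n • (ψ (r * y)).snd = (intAugmentation G r * n) • (ψ y).snd
    rw [snd_lift_toDualNumber_mul_of_mem_ker φ r y.2, smul_comm, mul_smul]
  ext g
  have hx : of ℤ G g - 1 ∈ I := by simp [I]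
  have hsmul : (of ℤ G g - 1) • (1 : ℤ) = 0 := by
    change intAugmentation G (of ℤ G g - 1) * 1 = 0
    simp
  have hvanish := Module.Flat.balanced_eq_zero_of_smul_eq_zero I f hf (x := ⟨_, hx⟩) hsmul
  change (1 : ℤ) • (ψ (of ℤ G g - 1)).snd = 0 at hvanish
  rw [one_smul, map_sub, map_one, TrivSqZeroExt.snd_sub, TrivSqZeroExt.snd_one, sub_zero,
    snd_lift_toDualNumber_of] at hvanish
  exact toAdd_eq_zero.mp hvanish

end MonoidAlgebra

/-- Let `k` be a field and `G = Multiplicative k` its additive group written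
multiplicatively. With the `ℤ[G]`-module structure on `ℤ` given by the augmentation map
`ℤ[G] → ℤ` (sending every `g ∈ G` to `1`), `ℤ` is not flat as a `ℤ[G]`-module. -/
theorem stmt_7 (k : Type*) [Field k] :
    ¬ @Module.Flat (MonoidAlgebra ℤ (Multiplicative k)) ℤ _ _
        (Module.compHom ℤ
          ((MonoidAlgebra.lift ℤ ℤ (Multiplicative k))
            (1 : Multiplicative k →* ℤ)).toRingHom) := by
  intro hflat
  have hid := MonoidAlgebra.eq_one_of_flat_intAugmentation hflat (MonoidHom.id (Multiplicative k))
  exact one_ne_zero (congr(Multiplicative.toAdd ($hid (Multiplicative.ofAdd (1 : k)))))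
end

section
/- Let A be a commutative group. Then every A-module is flat: for every A-module F and every injective morphism of A-modules M → N, the induced map F ⊗_A M → F ⊗_A N is injective. -/
/-- The elementary relation `(a • m, n) ∼ (m, a • n)` generating the tensor product of two
modules over a commutative monoid `A`. -/
def MonTensor.Rel (A : Type*) [CommMonoid A] (M N : Type*) [MulAction A M] [MulAction A N] :
    M × N → M × N → Prop :=
  fun p q => ∃ (a : A) (m : M) (n : N), p = (a • m, n) ∧ q = (m, a • n)

/-- The tensor product `M ⊗_A N` of two modules over a commutative monoid `A`: the quotient
of `M × N` by the equivalence relation generated by `(a • m, n) ∼ (m, a • n)`. -/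
def MonTensor (A : Type*) [CommMonoid A] (M N : Type*) [MulAction A M] [MulAction A N] :=
  Quot (MonTensor.Rel A M N)

/-- The map `F ⊗_A M → F ⊗_A N` induced by an `A`-equivariant map `f : M → N`. -/
def MonTensor.map (A : Type*) [CommMonoid A] {F M N : Type*}
    [MulAction A F] [MulAction A M] [MulAction A N]
    (f : M → N) (hf : ∀ (a : A) (m : M), f (a • m) = a • f m) :
    MonTensor A F M → MonTensor A F N :=
  Quot.map (fun p => (p.1, f p.2)) (by
    rintro p q ⟨a, m, n, h1, h2⟩
    subst h1; subst h2
    exact ⟨a, m, f n, rfl, by simp [hf]⟩)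

/-- A module `F` over a commutative monoid `A` is flat if for every injective
`A`-equivariant map `M → N` the induced map `F ⊗_A M → F ⊗_A N` is injective. -/
def MonIsFlat (A : Type*) [CommMonoid A] (F : Type*) [MulAction A F] : Prop :=
  ∀ (M N : Type*) (_ : MulAction A M) (_ : MulAction A N)
    (f : M → N) (hf : ∀ (a : A) (m : M), f (a • m) = a • f m),
    Function.Injective f → Function.Injective (MonTensor.map A (F := F) f hf)

/-- Over a group, the elementary relation is reformulated as: `q = (a⁻¹ • p.1, a • p.2)`. -/
lemma MonTensor.rel_iff (A : Type*) [CommGroup A] (M N : Type*) [MulAction A M] [MulAction A N]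
    (p q : M × N) :
    MonTensor.Rel A M N p q ↔ ∃ a : A, q.1 = a⁻¹ • p.1 ∧ q.2 = a • p.2 := by
  constructor
  · rintro ⟨a, m, n, rfl, rfl⟩
    exact ⟨a, by simp, by simp⟩
  · rintro ⟨a, h1, h2⟩
    refine ⟨a, q.1, p.2, ?_, ?_⟩
    · ext <;> simp [h1]
    · ext <;> simp [h2]

/-- Over a group, the elementary relation is already an equivalence relation. -/
lemma MonTensor.eqvGen_iff (A : Type*) [CommGroup A] (M N : Type*) [MulAction A M]
    [MulAction A N] (p q : M × N) :
    Relation.EqvGen (MonTensor.Rel A M N) p q ↔ MonTensor.Rel A M N p q := by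
  constructor
  · intro h
    induction h with
    | rel x y h => exact h
    | refl x => exact (MonTensor.rel_iff A M N x x).2 ⟨1, by simp, by simp⟩
    | symm x y h ih =>
        obtain ⟨a, h1, h2⟩ := (MonTensor.rel_iff A M N x y).1 ih
        exact (MonTensor.rel_iff A M N y x).2 ⟨a⁻¹, by simp [h1], by simp [h2]⟩
    | trans x y z h1 h2 ih1 ih2 =>
        obtain ⟨a, ha1, ha2⟩ := (MonTensor.rel_iff A M N x y).1 ih1
        obtain ⟨b, hb1, hb2⟩ := (MonTensor.rel_iff A M N y z).1 ih2
        refine (MonTensor.rel_iff A M N x z).2 ⟨b * a, ?_, ?_⟩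
        · rw [hb1, ha1, mul_inv_rev, mul_smul, smul_comm]
        · simp [hb2, ha2, mul_smul]
  · exact Relation.EqvGen.rel p q

/-- Over a commutative group `A`, every `A`-module is flat. -/
theorem stmt_8 (A : Type*) [CommGroup A] (F : Type*) [MulAction A F] :
    MonIsFlat A F := by
  intro M N _ _ f hf hinj p q h
  induction p using Quot.ind with | _ p =>
  induction q using Quot.ind with | _ q =>
  have h' : Relation.EqvGen (MonTensor.Rel A F N) (p.1, f p.2) (q.1, f q.2) :=
    Quot.eqvGen_exact h
  obtain ⟨a, h1, h2⟩ := (MonTensor.rel_iff A F N _ _).1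
    ((MonTensor.eqvGen_iff A F N _ _).1 h')
  apply Quot.sound
  refine (MonTensor.rel_iff A F M p q).2 ⟨a, h1, hinj ?_⟩
  simpa [hf] using h2
end

section
/- Let C₊ = (ℕ,+) be the free commutative monoid on one generator τ, and let M be a C₊-module, i.e., a set M with a map t : M → M giving the action of τ. Then M is flat as a C₊-module if and only if t is injective (i.e., τ·m = τ·m′ implies m = m′ for all m, m′ ∈ M). -/
/-- The `C₊ = (ℕ,+)`-module structure on a set `M` determined by a self-map
`t : M → M` as the action of the generator `τ`. -/
def natAction (M : Type*) (t : M → M) : MulAction (Multiplicative ℕ) M where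
  smul n m := t^[n.toAdd] m
  one_smul m := by
    show t^[Multiplicative.toAdd 1] m = m
    simp
  mul_smul x y m := by
    show t^[Multiplicative.toAdd (x * y)] m =
      t^[Multiplicative.toAdd x] (t^[Multiplicative.toAdd y] m)
    rw [toAdd_mul, Function.iterate_add_apply]

/-
For an action of `C₊ = (ℕ,+)`, tensor products can be computed explicitly when every
`a • ·` is injective: `(x, n)` and `(y, n')` are identified in `F ⊗ N` iff `x = a • w`,
`y = b • w` and `a • n = b • n'` for some `w`. Transitivity of this relation uses that
divisibility in `C₊` is total, and injective equivariant maps visibly reflect the relation, so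
such `F` is flat. Conversely, tensoring with the injection `τ · : C₊ → C₊` and identifying
`F ⊗ C₊ ≅ F` shows that `τ` acts injectively on a flat module.
-/

universe u v w

open Function Multiplicative

namespace MonTensor

variable {A : Type*} [CommMonoid A] {F N : Type*} [MulAction A F] [MulAction A N]

theorem mk_smul_left (a : A) (x : F) (n : N) :
    Quot.mk (Rel A F N) (a • x, n) = Quot.mk _ (x, a • n) :=
  Quot.sound ⟨a, x, n, rfl, rfl⟩

variable (A) in
def Joined (p q : F × N) : Prop :=
  ∃ (a b : A) (w : F), p.1 = a • w ∧ q.1 = b • w ∧ a • p.2 = b • q.2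

namespace Joined

theorem refl (p : F × N) : Joined A p p :=
  ⟨1, 1, p.1, (one_smul A _).symm, (one_smul A _).symm, rfl⟩

theorem symm {p q : F × N} : Joined A p q → Joined A q p := by
  rintro ⟨a, b, w, hp, hq, h⟩
  exact ⟨b, a, w, hq, hp, h.symm⟩

theorem of_rel {p q : F × N} : Rel A F N p q → Joined A p q := by
  rintro ⟨a, x, n, rfl, rfl⟩
  exact ⟨a, 1, x, rfl, (one_smul A x).symm, (one_smul A _).symm⟩

theorem mk_eq {p q : F × N} : Joined A p q → Quot.mk (Rel A F N) p = Quot.mk _ q := by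
  obtain ⟨x, n⟩ := p
  obtain ⟨y, n'⟩ := q
  rintro ⟨a, b, w, rfl, rfl, h⟩
  rw [mk_smul_left, mk_smul_left, h]

theorem trans_of_eq_mul {p q r : F × N} {a b c d e : A} {w v : F}
    (hp : p.1 = a • w) (hq : q.1 = b • w) (hpq : a • p.2 = b • q.2)
    (hq' : q.1 = c • v) (hr : r.1 = d • v) (hqr : c • q.2 = d • r.2)
    (hcb : c = b * e) (hb : Injective (b • · : F → F)) : Joined A p r := by
  have hw : w = e • v := hb <| by simp only [← hq, hq', hcb, mul_smul]
  refine ⟨a * e, d, v, by rw [hp, hw, mul_smul], hr, ?_⟩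
  rw [mul_comm, mul_smul, hpq, ← mul_smul, mul_comm, ← hcb, hqr]

theorem trans (htotal : ∀ a b : A, a ∣ b ∨ b ∣ a)
    (hinj : ∀ a : A, Injective (a • · : F → F)) {p q r : F × N} : Joined A p q → Joined A q r → Joined A p r := by
  rintro ⟨a, b, w, hp, hq, hpq⟩ ⟨c, d, v, hq', hr, hqr⟩
  rcases htotal b c with ⟨e, hcb⟩ | ⟨e, hbc⟩
  · exact trans_of_eq_mul hp hq hpq hq' hr hqr hcb (hinj b)
  · exact (trans_of_eq_mul hr hq' hqr.symm hq hp hpq.symm hbc (hinj c)).symm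

end Joined

theorem mk_eq_mk_iff_joined (htotal : ∀ a b : A, a ∣ b ∨ b ∣ a)
    (hinj : ∀ a : A, Injective (a • · : F → F)) {p q : F × N} :
    Quot.mk (Rel A F N) p = Quot.mk _ q ↔ Joined A p q := by
  refine ⟨fun h => ?_, Joined.mk_eq⟩
  have hequiv : Equivalence (Joined A (F := F) (N := N)) :=
    ⟨Joined.refl, Joined.symm, Joined.trans htotal hinj⟩
  exact hequiv.eqvGen_iff.1 ((Quot.eq.1 h).mono fun _ _ => Joined.of_rel)

def rid : MonTensor A F (ULift A) → F :=
  Quot.lift (fun p => p.2.down • p.1) <| by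
    rintro _ _ ⟨a, x, n, rfl, rfl⟩
    show n.down • a • x = (a * n.down) • x
    rw [← mul_smul, mul_comm]

theorem rid_mk (x : F) (a : A) : rid (Quot.mk _ (x, ULift.up a)) = a • x := rfl

end MonTensor

theorem monIsFlat_of_smul_injective {A F : Type*} [CommMonoid A] [MulAction A F]
    (htotal : ∀ a b : A, a ∣ b ∨ b ∣ a) (hinj : ∀ a : A, Injective (a • · : F → F)) :
    MonIsFlat A F := by
  intro M N _ _ f hf hf_inj x y hxy
  obtain ⟨⟨u, m⟩, rfl⟩ := Quot.exists_rep x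
  obtain ⟨⟨v, m'⟩, rfl⟩ := Quot.exists_rep y
  obtain ⟨a, b, w, hu, hv, hfm⟩ := (MonTensor.mk_eq_mk_iff_joined htotal hinj).1 hxy
  refine MonTensor.Joined.mk_eq ⟨a, b, w, hu, hv, hf_inj ?_⟩
  simpa only [hf] using hfm

theorem MonIsFlat.smul_injective {A : Type u} {F : Type*} [CommMonoid A] [MulAction A F]
    (hF : MonIsFlat.{u, _, max u v, max u w} A F) {a : A} (ha : IsLeftRegular a) :
    Injective (a • · : F → F) := by
  let f : ULift.{v} A → ULift.{w} A := fun x => ULift.up (a * x.down)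
  have hf : ∀ (b : A) (x : ULift.{v} A), f (b • x) = b • f x := fun b x =>
    congrArg ULift.up (mul_left_comm a b x.down)
  have hf_inj : Injective f := fun x y h => ULift.ext _ _ (ha (congrArg ULift.down h))
  intro x y (hxy : a • x = a • y)
  have hmap : MonTensor.map A f hf (Quot.mk _ (x, ULift.up 1)) =
      MonTensor.map A f hf (Quot.mk _ (y, ULift.up 1)) := by
    show Quot.mk _ (x, a • ULift.up 1) = Quot.mk _ (y, a • ULift.up 1)
    rw [← MonTensor.mk_smul_left, ← MonTensor.mk_smul_left, hxy]
  simpa only [MonTensor.rid_mk, one_smul] using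
    congrArg MonTensor.rid (hF _ _ _ _ f hf hf_inj hmap)

/-- A module `M` over the free commutative monoid `C₊ = (ℕ,+)` on one
generator `τ`, given by a self-map `t : M → M`, is flat iff `t` is injective. -/
theorem stmt_9 (M : Type*) (t : M → M) :
    @MonIsFlat (Multiplicative ℕ) _ M (natAction M t) ↔ Function.Injective t := by
  let := natAction M t
  refine ⟨fun hflat => hflat.smul_injective (a := ofAdd 1) (IsLeftRegular.all _), fun ht => ?_⟩
  refine monIsFlat_of_smul_injective (fun a b => ?_) fun a => ht.iterate a.toAdd
  exact (le_total a b).imp le_iff_exists_mul.1 le_iff_exists_mul.1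
end

section
/- Let A be a commutative monoid and S a submonoid of A. Then the localization S⁻¹A, regarded as an A-module via the canonical homomorphism A → S⁻¹A, is a flat A-module. -/
section Aux

variable {A : Type*} [CommMonoid A]

def locRel (S : Submonoid A) (M : Type*) [MulAction A M] (p q : M × S) : Prop :=
  ∃ t : S, ((t : A) * (q.2 : A)) • p.1 = ((t : A) * (p.2 : A)) • q.1

theorem locRel_equiv (S : Submonoid A) (M : Type*) [MulAction A M] :
    Equivalence (locRel S M) := by
  constructor
  · intro p; exact ⟨1, rfl⟩
  · rintro p q ⟨t, ht⟩; exact ⟨t, ht.symm⟩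
  · rintro p q r ⟨t, ht⟩ ⟨u, hu⟩
    refine ⟨t * u * q.2, ?_⟩
    have e1 := congrArg (fun x => ((u : A) * (r.2 : A)) • x) ht
    have e2 := congrArg (fun x => ((t : A) * (p.2 : A)) • x) hu
    simp only [smul_smul, Submonoid.coe_mul] at e1 e2 ⊢
    calc ((t:A) * u * q.2 * r.2) • p.1
        = ((u:A) * r.2 * ((t:A) * q.2)) • p.1 := by
          rw [show ((t:A) * u * q.2 * r.2) = ((u:A) * r.2 * ((t:A) * q.2)) by ac_rfl]
      _ = ((u:A) * r.2 * ((t:A) * p.2)) • q.1 := e1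
      _ = ((t:A) * p.2 * ((u:A) * r.2)) • q.1 := by
          rw [show ((u:A) * r.2 * ((t:A) * p.2)) = ((t:A) * p.2 * ((u:A) * r.2)) by ac_rfl]
      _ = ((t:A) * p.2 * ((u:A) * q.2)) • r.1 := e2
      _ = ((t:A) * u * q.2 * p.2) • r.1 := by
          rw [show ((t:A) * p.2 * ((u:A) * q.2)) = ((t:A) * u * q.2 * p.2) by ac_rfl]

def locSetoid (S : Submonoid A) (M : Type*) [MulAction A M] : Setoid (M × S) :=
  ⟨locRel S M, locRel_equiv S M⟩

def LocMod (S : Submonoid A) (M : Type*) [MulAction A M] := Quotient (locSetoid S M)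

def locMk (S : Submonoid A) {M : Type*} [MulAction A M] (m : M) (s : S) : LocMod S M :=
  Quotient.mk (locSetoid S M) (m, s)

theorem locMk_eq_of (S : Submonoid A) {M : Type*} [MulAction A M] {m m' : M} {s s' : S}
    (t : S) (h : ((t : A) * (s' : A)) • m = ((t : A) * (s : A)) • m') :
    locMk S m s = locMk S m' s' :=
  Quotient.sound ⟨t, h⟩

def toLocFun (S : Submonoid A) {M : Type*} [MulAction A M] (m : M) :
    Localization S → LocMod S M :=
  fun z => Localization.liftOn z (fun a s => locMk S (a • m) s) (by
    intro a c b d h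
    rcases Localization.r_iff_exists.mp h with ⟨t, ht⟩
    refine locMk_eq_of S t ?_
    simp only [smul_smul]
    rw [mul_assoc, mul_assoc, ht])

theorem toLocFun_mk (S : Submonoid A) {M : Type*} [MulAction A M] (m : M) (a : A) (s : S) :
    toLocFun S m (Localization.mk a s) = locMk S (a • m) s :=
  Localization.liftOn_mk _ _ _ _

def toLoc (S : Submonoid A) {M : Type*} [MulAction A M] :
    MonTensor A (Localization S) M → LocMod S M :=
  Quot.lift (fun p => toLocFun S p.2 p.1) (by
    rintro p q ⟨a, x, n, h1, h2⟩
    subst h1; subst h2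
    dsimp only
    induction x using Localization.ind with
    | _ y =>
      rw [Localization.smul_mk, toLocFun_mk, toLocFun_mk]
      simp only [smul_eq_mul]
      congr 1
      rw [mul_comm, mul_smul])

theorem loc_step (S : Submonoid A) {M : Type*} [MulAction A M] (v w : S) (x : M) :
    Quot.mk (MonTensor.Rel A (Localization S) M) (Localization.mk 1 w, x) =
    Quot.mk (MonTensor.Rel A (Localization S) M) (Localization.mk 1 (v * w), (v : A) • x) := by
  have h1 : Localization.mk (1 : A) w = (v : A) • Localization.mk 1 (v * w) := by
    rw [Localization.smul_mk, Localization.mk_eq_mk_iff, Localization.r_iff_exists]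
    refine ⟨1, ?_⟩
    push_cast
    simp only [smul_eq_mul, mul_one, one_mul]
    ac_rfl
  rw [h1]
  exact Quot.sound ⟨(v : A), Localization.mk 1 (v * w), x, rfl, rfl⟩

def fromLoc (S : Submonoid A) {M : Type*} [MulAction A M] :
    LocMod S M → MonTensor A (Localization S) M :=
  Quotient.lift (fun p : M × S => Quot.mk _ (Localization.mk 1 p.2, p.1)) (by
    rintro ⟨m, s⟩ ⟨m', s'⟩ ⟨t, ht⟩
    dsimp only at ht ⊢
    rw [loc_step S (t * s') s m, loc_step S (t * s) s' m']
    have hd : (t * s') * s = (t * s) * s' := by ac_rfl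
    rw [hd]
    congr 2)

theorem fromLoc_toLoc (S : Submonoid A) {M : Type*} [MulAction A M]
    (x : MonTensor A (Localization S) M) : fromLoc S (toLoc S x) = x := by
  induction x using Quot.ind with
  | _ p =>
    obtain ⟨z, m⟩ := p
    induction z using Localization.ind with
    | _ y =>
      obtain ⟨a, s⟩ := y
      show fromLoc S (toLocFun S m (Localization.mk a s)) = _
      rw [toLocFun_mk]
      show Quot.mk _ (Localization.mk 1 s, a • m) = Quot.mk _ (Localization.mk a s, m)
      have h1 : Localization.mk a s = a • Localization.mk (1:A) s := by
        rw [Localization.smul_mk, smul_eq_mul, mul_one]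
      rw [h1]
      exact (Quot.sound ⟨a, Localization.mk 1 s, m, rfl, rfl⟩).symm

def locMap (S : Submonoid A) {M N : Type*} [MulAction A M] [MulAction A N]
    (f : M → N) (hf : ∀ (a : A) (m : M), f (a • m) = a • f m) :
    LocMod S M → LocMod S N :=
  Quotient.lift (fun p : M × S => locMk S (f p.1) p.2) (by
    rintro ⟨m, s⟩ ⟨m', s'⟩ ⟨t, ht⟩
    exact locMk_eq_of S t (by dsimp only at ht ⊢; rw [← hf, ← hf, ht]))

theorem locMap_injective (S : Submonoid A) {M N : Type*} [MulAction A M] [MulAction A N]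
    (f : M → N) (hf : ∀ (a : A) (m : M), f (a • m) = a • f m) (hinj : Function.Injective f) :
    Function.Injective (locMap S f hf) := by
  intro x y h
  induction x using Quotient.ind with
  | _ p =>
  induction y using Quotient.ind with
  | _ q =>
    obtain ⟨m, s⟩ := p; obtain ⟨m', s'⟩ := q
    obtain ⟨t, ht⟩ := Quotient.exact h
    dsimp only at ht
    rw [← hf, ← hf] at ht
    exact Quotient.sound ⟨t, hinj ht⟩

theorem toLoc_map (S : Submonoid A) {M N : Type*} [MulAction A M] [MulAction A N]
    (f : M → N) (hf : ∀ (a : A) (m : M), f (a • m) = a • f m)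
    (x : MonTensor A (Localization S) M) :
    toLoc S (MonTensor.map A f hf x) = locMap S f hf (toLoc S x) := by
  induction x using Quot.ind with
  | _ p =>
    obtain ⟨z, m⟩ := p
    induction z using Localization.ind with
    | _ y =>
      obtain ⟨a, s⟩ := y
      show toLocFun S (f m) (Localization.mk a s) = locMap S f hf (toLocFun S m (Localization.mk a s))
      rw [toLocFun_mk, toLocFun_mk]
      show locMk S (a • f m) s = locMk S (f (a • m)) s
      rw [hf]

end Aux

/-- For a commutative monoid `A` and a submonoid `S`, the localization
`S⁻¹A`, viewed as an `A`-module via the canonical map `A → S⁻¹A`, is flat. -/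
theorem stmt_10 (A : Type*) [CommMonoid A] (S : Submonoid A) :
    MonIsFlat A (Localization S) := by
  intro M N hM hN f hf hinj x y h
  have h2 := congrArg (toLoc S) h
  rw [toLoc_map, toLoc_map] at h2
  have h3 := locMap_injective S f hf hinj h2
  rw [← fromLoc_toLoc S x, ← fromLoc_toLoc S y, h3]
end

section
/- Let A be a commutative monoid and F an A-module. Equip the free abelian group ℤ[F] (finitely supported functions F → ℤ) with the module structure over ℤ[A] = MonoidAlgebra ℤ A obtained by extending the A-action on the basis F ℤ-bilinearly. If ℤ[F] is a flat ℤ[A]-module (in the usual ring-theoretic sense), then F is a flat A-module. -/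
/-! The basis map `(x, m) ↦ x ⊗ m` induces a map `ι : F ⊗_A M → ℤ[F] ⊗_{ℤ[A]} ℤ[M]`, natural in
`M`. It is injective: the `ℤ[A]`-balanced bilinear map `ℤ[F] × ℤ[M] → ℤ[F ⊗_A M]` extending
`(x, m) ↦ [x ⊗ m]` sends `ι t` to the basis vector `[t]`. An injective equivariant map `f : M → N`
linearises to an injective `ℤ[A]`-linear map `ℤ[M] → ℤ[N]`, so flatness of `ℤ[F]` makes
`ℤ[F] ⊗ ℤ[f]` injective, and naturality of `ι` transfers this to `F ⊗_A f`. -/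

namespace Representation

open MonoidAlgebra

variable {k G X Y : Type*} [CommSemiring k] [Monoid G] [MulAction G X] [MulAction G Y]

theorem of_smul_ofMulAction_single (g : G) (x : X) (r : k) :
    of k G g • (ofMulAction k G X).asModuleEquiv.symm (single x r) =
      (ofMulAction k G X).asModuleEquiv.symm (single (g • x) r) := by
  rw [← asModuleEquiv_symm_map_rho, ofMulAction_single]

variable (k) in
noncomputable def ofMulActionHom (f : X →[G] Y) :
    IntertwiningMap (ofMulAction k G X) (ofMulAction k G Y) where
  toLinearMap := mapDomainLinearMap k k f
  isIntertwining' g := by ext x; simp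

theorem ofMulActionHom_single (f : X →[G] Y) (x : X) (r : k) :
    ofMulActionHom k f (single x r) = single (f x) r :=
  mapDomainLinearMap_single _ _ _

theorem ofMulActionHom_injective {f : X →[G] Y} (hf : Function.Injective f) :
    Function.Injective (ofMulActionHom k f) :=
  mapDomain_injective hf

end Representation

namespace MonTensor

open MonoidAlgebra Representation TensorProduct

variable (k : Type*) [CommSemiring k] {A F M N : Type*} [CommMonoid A]
  [MulAction A F] [MulAction A M] [MulAction A N]

noncomputable def toTensorProduct :
    MonTensor A F M → (ofMulAction k A F).asModule ⊗[k[A]] (ofMulAction k A M).asModule :=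
  Quot.lift (fun p => (ofMulAction k A F).asModuleEquiv.symm (single p.1 1) ⊗ₜ
      (ofMulAction k A M).asModuleEquiv.symm (single p.2 1)) <| by
    rintro _ _ ⟨a, x, m, rfl, rfl⟩
    simp only [← of_smul_ofMulAction_single, smul_tmul]

noncomputable def ofTensorProductBilin :
    (ofMulAction k A F).asModule →ₗ[k] (ofMulAction k A M).asModule →ₗ[k] k[MonTensor A F M] :=
  (TensorProduct.mk k _ _).compr₂ <| mapDomainLinearMap k k (Quot.mk _) ∘ₗ
    (tensorEquiv (R := k)).toLinearMap ∘ₗ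
    TensorProduct.map (ofMulAction k A F).asModuleEquiv.toLinearMap
      (ofMulAction k A M).asModuleEquiv.toLinearMap

theorem ofTensorProductBilin_single (x : F) (m : M) (r s : k) :
    ofTensorProductBilin k ((ofMulAction k A F).asModuleEquiv.symm (single x r))
      ((ofMulAction k A M).asModuleEquiv.symm (single m s)) =
      single (Quot.mk _ (x, m)) (r * s) := by
  simp only [ofTensorProductBilin, LinearMap.compr₂_apply, mk_apply, LinearMap.comp_apply,
    map_tmul, LinearEquiv.coe_coe, LinearEquiv.apply_symm_apply, tensorEquiv_single_tmul_single]
  exact mapDomainLinearMap_single (R := k) _ _ _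

theorem ofTensorProductBilin_of_smul (a : A) (p : (ofMulAction k A F).asModule)
    (q : (ofMulAction k A M).asModule) :
    ofTensorProductBilin k (of k A a • p) q = ofTensorProductBilin k p (of k A a • q) := by
  obtain ⟨p, rfl⟩ := (ofMulAction k A F).asModuleEquiv.symm.surjective p
  obtain ⟨q, rfl⟩ := (ofMulAction k A M).asModuleEquiv.symm.surjective q
  induction p using MonoidAlgebra.induction_linear with
  | zero => simp only [map_zero, smul_zero, LinearMap.zero_apply]
  | add p p' hp hp' => simp only [map_add, smul_add, LinearMap.add_apply, hp, hp']
  | single x r =>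
    induction q using MonoidAlgebra.induction_linear with
    | zero => simp only [map_zero, smul_zero]
    | add q q' hq hq' => simp only [map_add, smul_add, hq, hq']
    | single m s =>
      rw [of_smul_ofMulAction_single, of_smul_ofMulAction_single, ofTensorProductBilin_single,
        ofTensorProductBilin_single, Quot.sound ⟨a, x, m, rfl, rfl⟩]

theorem ofTensorProductBilin_smul (c : k[A]) (p : (ofMulAction k A F).asModule)
    (q : (ofMulAction k A M).asModule) :
    ofTensorProductBilin k (c • p) q = ofTensorProductBilin k p (c • q) := by
  induction c using MonoidAlgebra.induction_on with
  | of a => exact ofTensorProductBilin_of_smul k a p q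
  | add c c' hc hc' => simp only [add_smul, map_add, LinearMap.add_apply, hc, hc']
  | smul r c hc => simp only [smul_assoc, map_smul, LinearMap.smul_apply, hc]

noncomputable def ofTensorProduct :
    (ofMulAction k A F).asModule ⊗[k[A]] (ofMulAction k A M).asModule →+ k[MonTensor A F M] :=
  liftAddHom (LinearMap.toAddMonoidHom'.comp (ofTensorProductBilin k).toAddMonoidHom)
    (ofTensorProductBilin_smul k)

theorem ofTensorProduct_toTensorProduct (t : MonTensor A F M) :
    ofTensorProduct k (toTensorProduct k t) = single t 1 := by
  induction t using Quot.ind with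
  | mk p => exact (ofTensorProductBilin_single k p.1 p.2 1 1).trans (by rw [mul_one]; rfl)

theorem toTensorProduct_injective [Nontrivial k] :
    Function.Injective (toTensorProduct k (A := A) (F := F) (M := M)) := fun s t h =>
  single_left_injective one_ne_zero <| by
    simpa only [ofTensorProduct_toTensorProduct] using congrArg (ofTensorProduct k) h

theorem toTensorProduct_map (f : M → N) (hf : ∀ (a : A) (m : M), f (a • m) = a • f m)
    (t : MonTensor A F M) :
    toTensorProduct k (MonTensor.map A f hf t) =
      (IntertwiningMap.equivLinearMapAsModule _ _ (ofMulActionHom k ⟨f, hf⟩)).lTensor _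
        (toTensorProduct k t) := by
  induction t using Quot.ind with
  | mk p =>
    change _ ⊗ₜ _ = LinearMap.lTensor _ _ (_ ⊗ₜ _)
    rw [LinearMap.lTensor_tmul]
    exact congrArg _ (ofMulActionHom_single (k := k) ⟨f, hf⟩ p.2 1).symm

end MonTensor

/-- Let `A` be a commutative monoid and `F` an `A`-module. Equip the free
abelian group `ℤ[F]` with the `ℤ[A] = MonoidAlgebra ℤ A`-module structure extending the
`A`-action on the basis `F` ℤ-bilinearly (i.e. the module associated to the permutation
representation `Representation.ofMulAction ℤ A F`).  If `ℤ[F]` is flat as a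
`ℤ[A]`-module, then `F` is flat as an `A`-module. -/
theorem stmt_11 (A : Type*) [CommMonoid A] (F : Type*) [MulAction A F]
    (hflat : Module.Flat (MonoidAlgebra ℤ A) (Representation.ofMulAction ℤ A F).asModule) :
    MonIsFlat A F := by
  intro M N _ _ f hf hinj s t h
  let L := Representation.IntertwiningMap.equivLinearMapAsModule _ _
    (Representation.ofMulActionHom ℤ (⟨f, hf⟩ : M →[A] N))
  have hL : Function.Injective (L.lTensor (Representation.ofMulAction ℤ A F).asModule) :=
    Module.Flat.lTensor_preserves_injective_linearMap L
      (Representation.ofMulActionHom_injective hinj)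
  apply MonTensor.toTensorProduct_injective ℤ
  apply hL
  rw [← MonTensor.toTensorProduct_map, ← MonTensor.toTensorProduct_map, h]
end
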